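/- For every θ > 0, δ ∈ (0,1), and r ∈ [−1,1], one has F_δ^log(r) ≤ F^log(r). -/

import Mathlib

/-!
On `[1 - δ, 1]` the regularized bracket is exactly the second-order Taylor polynomial at `1 - δ`
of `logPot r = (1 + r) log (1 + r) + (1 - r) log (1 - r)`. Since
`logPot'' r = 2 / (1 - r ^ 2)` increases on `[0, 1)`, `logPot` lies above that polynomial there.
The branch `r ≤ -(1 - δ)` is the mirror image under `r ↦ -r`, and in between `F_δ^log = F^log`.
-/

open Real Set

noncomputable def Flogδ (θ δ : ℝ) (r : ℝ) : ℝ :=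
  if 1 - δ ≤ r then
    (θ/2) * ((1-r) * Real.log δ + (1+r) * Real.log (2-δ)
      + (1-r)^2/(2*δ) + (1+r)^2/(2*(2-δ)) - 1)
  else if r ≤ -(1-δ) then
    (θ/2) * ((1+r) * Real.log δ + (1-r) * Real.log (2-δ)
      + (1+r)^2/(2*δ) + (1-r)^2/(2*(2-δ)) - 1)
  else
    (θ/2) * ((1+r) * Real.log (1+r) + (1-r) * Real.log (1-r))

/-- The logarithmic potential `F^log` at temperature `θ`; since `Real.log 0 = 0`,
this formula agrees on `[−1,1]` with the continuous extension satisfying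
`F^log(±1) = θ log 2`. -/
noncomputable def Flog (θ : ℝ) (r : ℝ) : ℝ :=
  (θ/2) * ((1+r) * Real.log (1+r) + (1-r) * Real.log (1-r))

theorem taylor_two_le_of_deriv2_ge {f f' f'' : ℝ → ℝ} {a b x : ℝ}
    (hf : ContinuousOn f (Icc a b))
    (hf' : ∀ y ∈ Ico a b, HasDerivAt f (f' y) y)
    (hf'' : ∀ y ∈ Ico a b, HasDerivAt f' (f'' y) y)
    (hf''_ge : ∀ y ∈ Ico a b, f'' a ≤ f'' y) (hx : x ∈ Icc a b) :
    f a + f' a * (x - a) + f'' a / 2 * (x - a) ^ 2 ≤ f x := by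
  set g : ℝ → ℝ := fun y ↦ f' y - f' a - f'' a * (y - a)
  have hg : ∀ y ∈ Ico a b, HasDerivAt g (f'' y - f'' a) y := fun y hy ↦ by
    simpa using ((hf'' y hy).sub_const (f' a)).fun_sub
      (((hasDerivAt_id y).sub_const a).const_mul (f'' a))
  have hg_mono : MonotoneOn g (Ico a b) := by
    refine monotoneOn_of_hasDerivWithinAt_nonneg (f' := fun y ↦ f'' y - f'' a) (convex_Ico a b)
      (fun y hy ↦ (hg y hy).continuousAt.continuousWithinAt) (fun y hy ↦ ?_) (fun y hy ↦ ?_)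
    · exact (hg y (interior_subset hy)).hasDerivWithinAt
    · exact sub_nonneg.2 (hf''_ge y (interior_subset hy))
  have hg_nonneg : ∀ y ∈ Ico a b, 0 ≤ g y := fun y hy ↦ by
    simpa [g] using hg_mono (left_mem_Ico.2 (hy.1.trans_lt hy.2)) hy hy.1
  set h : ℝ → ℝ := fun y ↦ f y - (f a + f' a * (y - a) + f'' a / 2 * (y - a) ^ 2)
  have hh_mono : MonotoneOn h (Icc a b) := by
    refine monotoneOn_of_hasDerivWithinAt_nonneg (convex_Icc a b)
      (hf.sub (by fun_prop)) (fun y hy ↦ ?_) (fun y hy ↦ hg_nonneg y ?_)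
    · rw [interior_Icc] at hy
      have hT : HasDerivAt (fun y ↦ f a + f' a * (y - a) + f'' a / 2 * (y - a) ^ 2)
          (f' a + f'' a * (y - a)) y :=
        ((((hasDerivAt_id' y).sub_const a).const_mul (f' a)).const_add (f a) |>.fun_add
          ((((hasDerivAt_id' y).sub_const a).fun_pow 2).const_mul (f'' a / 2))).congr_deriv
          (by norm_num; ring)
      exact ((hf' y (Ioo_subset_Ico_self hy)).fun_sub hT).hasDerivWithinAt.congr_deriv (by ring)
    · rw [interior_Icc] at hy; exact Ioo_subset_Ico_self hy
  simpa [h] using hh_mono (left_mem_Icc.2 (hx.1.trans hx.2)) hx hx.1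

noncomputable def logPot (r : ℝ) : ℝ := (1 + r) * log (1 + r) + (1 - r) * log (1 - r)

theorem continuous_logPot : Continuous logPot := by
  unfold logPot; fun_prop

theorem hasDerivAt_logPot {r : ℝ} (hr : r ∈ Ioo (-1) 1) :
    HasDerivAt logPot (log (1 + r) - log (1 - r)) r := by
  have hplus := (hasDerivAt_mul_log (by linarith [hr.1] : 1 + r ≠ 0)).comp r
    ((hasDerivAt_id' r).const_add 1)
  have hminus := (hasDerivAt_mul_log (by linarith [hr.2] : 1 - r ≠ 0)).comp r
    ((hasDerivAt_id' r).const_sub 1)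
  exact (hplus.fun_add hminus).congr_deriv (by ring)

theorem hasDerivAt_log_one_add_sub_log_one_sub {r : ℝ} (hr : r ∈ Ioo (-1) 1) :
    HasDerivAt (fun r ↦ log (1 + r) - log (1 - r)) ((1 + r)⁻¹ + (1 - r)⁻¹) r := by
  have hplus := ((hasDerivAt_id' r).const_add 1).log (by linarith [hr.1])
  have hminus := ((hasDerivAt_id' r).const_sub 1).log (by linarith [hr.2])
  exact (hplus.fun_sub hminus).congr_deriv (by ring)

theorem inv_one_add_add_inv_one_sub_le {a r : ℝ} (ha : 0 ≤ a) (har : a ≤ r) (hr : r < 1) :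
    (1 + a)⁻¹ + (1 - a)⁻¹ ≤ (1 + r)⁻¹ + (1 - r)⁻¹ := by
  have hsum : ∀ x : ℝ, x ^ 2 < 1 → (1 + x)⁻¹ + (1 - x)⁻¹ = 2 / (1 - x ^ 2) := fun x hx ↦ by
    have : 1 + x ≠ 0 := by nlinarith
    have : 1 - x ≠ 0 := by nlinarith
    have : 1 - x ^ 2 ≠ 0 := by linarith
    field_simp
    ring
  rw [hsum a (by nlinarith), hsum r (by nlinarith)]
  gcongr
  nlinarith

theorem logPot_taylor_le {δ r : ℝ} (hδ0 : 0 < δ) (hδ1 : δ ≤ 1) (hr : r ∈ Icc (1 - δ) 1) :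
    (1 - r) * log δ + (1 + r) * log (2 - δ) + (1 - r) ^ 2 / (2 * δ)
      + (1 + r) ^ 2 / (2 * (2 - δ)) - 1 ≤ logPot r := by
  have hIoo : ∀ y ∈ Ico (1 - δ) 1, y ∈ Ioo (-1) 1 := fun y hy ↦ ⟨by linarith [hy.1], hy.2⟩
  have htaylor := taylor_two_le_of_deriv2_ge continuous_logPot.continuousOn
    (fun y hy ↦ hasDerivAt_logPot (hIoo y hy))
    (fun y hy ↦ hasDerivAt_log_one_add_sub_log_one_sub (hIoo y hy))
    (fun y hy ↦ inv_one_add_add_inv_one_sub_le (by linarith) hy.1 hy.2) hr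
  convert htaylor using 1
  have h2δ : 2 - δ ≠ 0 := by linarith
  rw [logPot, show 1 + (1 - δ) = 2 - δ by ring, show 1 - (1 - δ) = δ by ring]
  field_simp
  ring

/-- On `[−1,1]`, the regularized logarithmic potential lies below the logarithmic
potential: `F_δ^log(r) ≤ F^log(r)`. -/
theorem Flogδ_le_Flog (θ δ : ℝ) (hθ : 0 < θ) (hδ : δ ∈ Set.Ioo (0:ℝ) 1) :
    ∀ r ∈ Set.Icc (-1:ℝ) 1, Flogδ θ δ r ≤ Flog θ r := by
  obtain ⟨hδ0, hδ1⟩ := hδ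
  rintro r ⟨hr_ge, hr_le⟩
  have hθ2 : 0 ≤ θ / 2 := by positivity
  unfold Flogδ
  split_ifs with hupper
  · exact mul_le_mul_of_nonneg_left (logPot_taylor_le hδ0 hδ1.le ⟨hupper, hr_le⟩) hθ2
  · have hneg := logPot_taylor_le hδ0 hδ1.le (r := -r) ⟨by linarith, by linarith⟩
    rw [logPot, sub_neg_eq_add, ← sub_eq_add_neg] at hneg
    have := mul_le_mul_of_nonneg_left hneg hθ2
    unfold Flog
    linarith
  · exact le_rfl
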